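/- Let H be a critical, non-circular 3-hypergraph with |V(H)| ≥ 5, and let C be a component of 𝒫(H) of odd order at least 3, with isomorphism φ_C from P_{v(C)} onto C. Then φ_C is an isomorphism from C_3(U_{v(C)}) onto the induced subhypergraph H[V(C)]; in particular, E(H[V(C)]) = {φ_C(2i)φ_C(2j+1)φ_C(2k) : 0 ≤ i ≤ j < k ≤ (v(C)−1)/2}. -/

import Mathlib

/-- `M` is a module of the hypergraph with vertex set `verts` and edge set `edges`. -/
def IsModule {α : Type*} [DecidableEq α] (verts : Finset α) (edges : Set (Finset α))
    (M : Finset α) : Prop :=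
  M ⊆ verts ∧ ∀ e ∈ edges, (e ∩ M).Nonempty → (e \ M).Nonempty →
    ∃ m ∈ M, e ∩ M = {m} ∧ ∀ n ∈ M, (e \ {m}) ∪ {n} ∈ edges

/-- `(verts, edges)` is a hypergraph: edges are nonempty subsets of `verts`. -/
def IsHypergraph {α : Type*} (verts : Finset α) (edges : Set (Finset α)) : Prop :=
  ∀ e ∈ edges, e ⊆ verts ∧ e.Nonempty

/-- `(verts, edges)` is a 3-hypergraph: edges are 3-element subsets of `verts`. -/
def Is3Hypergraph {α : Type*} (verts : Finset α) (edges : Set (Finset α)) : Prop :=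
  ∀ e ∈ edges, e ⊆ verts ∧ e.card = 3

/-- Edges of the subhypergraph induced by `W`. -/
def induceEdges {α : Type*} (W : Finset α) (edges : Set (Finset α)) : Set (Finset α) :=
  {e ∈ edges | e ⊆ W}

/-- A hypergraph is prime if it has at least 3 vertices and all its modules are trivial. -/
def IsPrime {α : Type*} [DecidableEq α] (verts : Finset α) (edges : Set (Finset α)) : Prop :=
  3 ≤ verts.card ∧ ∀ M, IsModule verts edges M → M = ∅ ∨ M = verts ∨ ∃ v, M = {v}

/-- A prime hypergraph is critical if removing any vertex destroys primality. -/
def IsCritical {α : Type*} [DecidableEq α] (verts : Finset α) (edges : Set (Finset α)) : Prop :=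
  IsPrime verts edges ∧
    ∀ v ∈ verts, ¬ IsPrime (verts.erase v) (induceEdges (verts.erase v) edges)

/-- Adjacency in the primality graph: `v ≠ w` and `H - {v, w}` is prime. -/
def PrimAdj {α : Type*} [DecidableEq α] (verts : Finset α) (edges : Set (Finset α))
    (v w : α) : Prop :=
  v ≠ w ∧ v ∈ verts ∧ w ∈ verts ∧
    IsPrime (verts \ {v, w}) (induceEdges (verts \ {v, w}) edges)

/-- `(verts, arc)` is a tournament: the arc relation is irreflexive and, on distinct
vertices of `verts`, exactly one of `arc x y`, `arc y x` holds. -/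
def IsTournament {α : Type*} (verts : Finset α) (arc : α → α → Prop) : Prop :=
  (∀ x, ¬ arc x x) ∧ ∀ x ∈ verts, ∀ y ∈ verts, x ≠ y → (arc x y ↔ ¬ arc y x)

/-- `M` is a module of the tournament `(verts, arc)`. -/
def TournMod {α : Type*} (verts : Finset α) (arc : α → α → Prop) (M : Finset α) : Prop :=
  M ⊆ verts ∧ ∀ x ∈ M, ∀ y ∈ M, ∀ v ∈ verts, arc x v → arc v y → v ∈ M

/-- The edge set of the C₃-structure of a tournament: the 3-sets inducing a 3-cycle. -/
def c3Edges {α : Type*} [DecidableEq α] (verts : Finset α) (arc : α → α → Prop) :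
    Set (Finset α) :=
  {e | ∃ x y z, x ∈ verts ∧ y ∈ verts ∧ z ∈ verts ∧
    x ≠ y ∧ y ≠ z ∧ x ≠ z ∧ arc x y ∧ arc y z ∧ arc z x ∧ e = {x, y, z}}

/-- Arc relation of the tournament `T_p` on `{0, …, p-1}`: obtained from the transitive
tournament (arcs `i j` for `i < j`) by reversing all arcs between even and odd vertices. -/
def arcT (i j : ℕ) : Prop :=
  (i < j ∧ i % 2 = j % 2) ∨ (j < i ∧ i % 2 ≠ j % 2)

/-- A 3-hypergraph is circular if its order is odd and it is isomorphic to
`C₃(T_{v(H)})`. -/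
def IsCircular {α : Type*} [DecidableEq α] (verts : Finset α) (edges : Set (Finset α)) : Prop :=
  Odd verts.card ∧ ∃ f : α → ℕ, Set.InjOn f verts ∧
    verts.image f = Finset.range verts.card ∧
    ∀ e : Finset α, e ⊆ verts →
      (e ∈ edges ↔ e.image f ∈ c3Edges (Finset.range verts.card) arcT)

/-!
Criticality makes `H - v` non-prime for every vertex `v`. Restricting a nontrivial module of
`H - v` to a prime `H - {v, w}` shows that it is either `V - {v, w}` or a pair `{w, x}`; in the
second case the transposition of `w` and `x` is an automorphism of `H - v` carrying `H - {v, w}`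
onto `H - {v, x}`, so `x` is another neighbour of `v` in `𝒫(H)`. Along the path `φ 0, …, φ (m-1)`
this gives: every edge through `φ 1` passes through `φ 0`, every edge through `φ (m-2)` passes
through `φ (m-1)`, and `{φ i, φ (i+2)}` is a module of `H - φ (i+1)`. So an edge may slide one
of its path vertices by steps of two as long as it avoids the positions it crosses. Sliding
towards the ends rules out every triple of positions except even < odd < even; sliding away
from `{φ 0, φ 1, φ 2}` produces all of those, and `{φ 0, φ 1, φ 2}` is an edge because otherwise
no edge would contain `φ 1` and `V - φ 1` would be a nontrivial module of `H`.
-/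

open Finset

section Hypergraph

variable {α : Type*} {V W X M e : Finset α} {E : Set (Finset α)}

theorem Is3Hypergraph.isHypergraph (h : Is3Hypergraph V E) : IsHypergraph V E :=
  fun e he => ⟨(h e he).1, card_pos.1 (by rw [(h e he).2]; norm_num)⟩

theorem Is3Hypergraph.induce (h : Is3Hypergraph V E) (X : Finset α) :
    Is3Hypergraph X (induceEdges X E) :=
  fun e he => ⟨he.2, (h e he.1).2⟩

theorem induceEdges_induceEdges (h : X ⊆ W) :
    induceEdges X (induceEdges W E) = induceEdges X E := by
  ext e
  exact ⟨fun he => ⟨he.1.1, he.2⟩, fun he => ⟨⟨he.1, he.2.trans h⟩, he.2⟩⟩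

variable [DecidableEq α]

theorem Finset.exists_eq_triple_of_card_eq_three {a b : α} (h : e.card = 3) (ha : a ∈ e)
    (hb : b ∈ e) (hab : a ≠ b) : ∃ c, c ≠ a ∧ c ≠ b ∧ e = {a, b, c} := by
  have hb' : b ∈ e.erase a := mem_erase.2 ⟨hab.symm, hb⟩
  obtain ⟨c, hc⟩ := card_eq_one.1 (show ((e.erase a).erase b).card = 1 by
    rw [card_erase_of_mem hb', card_erase_of_mem ha, h])
  have hc' : c ∈ (e.erase a).erase b := hc ▸ mem_singleton_self c
  refine ⟨c, (mem_erase.1 (mem_erase.1 hc').2).1, (mem_erase.1 hc').1, ?_⟩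
  rw [← hc, insert_erase hb', insert_erase ha]

theorem Finset.exists_lt_lt_eq_of_card_eq_three {β : Type*} [LinearOrder β] {s : Finset β}
    (h : s.card = 3) : ∃ x y z, x < y ∧ y < z ∧ s = {x, y, z} := by
  set f := s.orderEmbOfFin h
  refine ⟨f 0, f 1, f 2, f.strictMono (by decide), f.strictMono (by decide), ?_⟩
  symm
  apply eq_of_subset_of_card_le
  · simp [insert_subset_iff, f, orderEmbOfFin_mem]
  · rw [h, card_eq_three.2 ⟨f 0, f 1, f 2, by simp, by simp, by simp, rfl⟩]

theorem Finset.exists_lt_lt_eq_image_of_card_eq_three {β : Type*} [LinearOrder β] {f : β → α}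
    {s : Finset β} (hf : Set.InjOn f s) (he : e ⊆ s.image f) (hcard : e.card = 3) :
    ∃ x y z, x < y ∧ y < z ∧ {x, y, z} ⊆ s ∧ e = {f x, f y, f z} := by
  obtain ⟨t, hts, rfl⟩ := subset_image_iff.1 he
  rw [card_image_of_injOn (hf.mono (coe_subset.2 hts))] at hcard
  obtain ⟨x, y, z, hxy, hyz, rfl⟩ := exists_lt_lt_eq_of_card_eq_three hcard
  exact ⟨x, y, z, hxy, hyz, hts, by simp only [image_insert, image_singleton]⟩

theorem Finset.map_swap_eq_self {q x : α} {s : Finset α} (hq : q ∉ s) (hx : x ∉ s) :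
    s.map (Equiv.swap q x).toEmbedding = s := by
  ext a
  rw [mem_map_equiv, Equiv.symm_swap]
  rcases eq_or_ne a q with rfl | haq
  · simp [hq, hx]
  rcases eq_or_ne a x with rfl | hax
  · simp [hq, hx]
  · rw [Equiv.swap_apply_of_ne_of_ne haq hax]

theorem Finset.map_swap_insert {q x : α} {s : Finset α} (hq : q ∉ s) (hx : x ∉ s) :
    (insert q s).map (Equiv.swap q x).toEmbedding = insert x s := by
  rw [map_insert, map_swap_eq_self hq hx]
  simp

theorem mem_induceEdges_erase_iff {v : α} (hV : IsHypergraph V E) (hv : v ∉ e) :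
    e ∈ induceEdges (V.erase v) E ↔ e ∈ E :=
  ⟨And.left, fun he =>
    ⟨he, fun _ ha => mem_erase.2 ⟨ne_of_mem_of_not_mem ha hv, (hV e he).1 ha⟩⟩⟩

theorem IsModule.inter (hM : IsModule W E M) (X : Finset α) :
    IsModule X (induceEdges X E) (M ∩ X) := by
  refine ⟨inter_subset_right, fun e ⟨heE, heX⟩ hne hdiff => ?_⟩
  have hinter : e ∩ (M ∩ X) = e ∩ M := by
    rw [← inter_assoc, inter_right_comm, inter_eq_left.2 heX]
  have hsdiff : e \ (M ∩ X) = e \ M := by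
    rw [sdiff_inter_distrib_right, sdiff_eq_empty_iff_subset.2 heX, union_empty]
  rw [hinter] at hne ⊢
  rw [hsdiff] at hdiff
  obtain ⟨a, haM, hsingle, hswap⟩ := hM.2 e heE hne hdiff
  have haX : a ∈ X := heX (mem_inter.1 (hsingle ▸ mem_singleton_self a)).1
  refine ⟨a, mem_inter.2 ⟨haM, haX⟩, hsingle,
    fun b hb => ⟨hswap b (mem_inter.1 hb).1, ?_⟩⟩
  exact union_subset (sdiff_subset.trans heX) (singleton_subset_iff.2 (mem_inter.1 hb).2)

theorem isModule_erase_of_forall_notMem {v : α} (hV : IsHypergraph V E)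
    (h : ∀ e ∈ E, v ∉ e) : IsModule V E (V.erase v) := by
  refine ⟨erase_subset v V, fun e he _ ⟨a, ha⟩ => absurd ?_ (h e he)⟩
  obtain ⟨hae, haV⟩ := mem_sdiff.1 ha
  obtain rfl : a = v := by_contra fun hav => haV (mem_erase.2 ⟨hav, (hV e he).1 hae⟩)
  exact hae

theorem IsPrime.card_le_one_or_eq (hP : IsPrime W E) (hM : IsModule W E M) :
    M.card ≤ 1 ∨ M = W := by
  rcases hP.2 M hM with rfl | rfl | ⟨v, rfl⟩ <;> simp

theorem exists_isModule_of_not_isPrime (hW : 3 ≤ W.card) (h : ¬ IsPrime W E) :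
    ∃ M, IsModule W E M ∧ 1 < M.card ∧ M ≠ W := by
  simp only [IsPrime, hW, true_and, not_forall, not_or] at h
  obtain ⟨M, hM, hM0, hMW, hM1⟩ := h
  refine ⟨M, hM, ?_, hMW⟩
  rcases (nonempty_iff_ne_empty.2 hM0).exists_eq_singleton_or_nontrivial with ⟨v, rfl⟩ | hnt
  · exact absurd ⟨v, rfl⟩ hM1
  · exact one_lt_card_iff_nontrivial.2 hnt

theorem IsModule.map_equiv {β : Type*} [DecidableEq β] {E' : Set (Finset β)} (σ : α ≃ β)
    (hE : ∀ e, e.map σ.toEmbedding ∈ E' ↔ e ∈ E) (hM : IsModule W E M) :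
    IsModule (W.map σ.toEmbedding) E' (M.map σ.toEmbedding) := by
  refine ⟨map_subset_map.2 hM.1, fun e' he' hne hdiff => ?_⟩
  obtain ⟨e, rfl⟩ : ∃ e, e' = e.map σ.toEmbedding :=
    ⟨e'.map σ.symm.toEmbedding, by simp [map_map]⟩
  rw [← map_inter, map_nonempty] at hne
  rw [← Finset.map_sdiff, map_nonempty] at hdiff
  obtain ⟨a, haM, hsingle, hswap⟩ := hM.2 e ((hE e).1 he') hne hdiff
  refine ⟨σ a, mem_map_of_mem _ haM, by rw [← map_inter, hsingle, map_singleton]; rfl, ?_⟩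
  intro b' hb'
  obtain ⟨b, hbM, rfl⟩ := mem_map.1 hb'
  have h := (hE _).2 (hswap b hbM)
  rwa [map_union, Finset.map_sdiff, map_singleton, map_singleton] at h

theorem IsPrime.map_equiv {β : Type*} [DecidableEq β] {E' : Set (Finset β)} (σ : α ≃ β)
    (hE : ∀ e, e.map σ.toEmbedding ∈ E' ↔ e ∈ E) (hP : IsPrime W E) :
    IsPrime (W.map σ.toEmbedding) E' := by
  refine ⟨by rw [card_map]; exact hP.1, fun M' hM' => ?_⟩
  have hE' : ∀ e, e.map σ.symm.toEmbedding ∈ E ↔ e ∈ E' := fun e => by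
    rw [← hE, map_map]; simp
  have hM := hM'.map_equiv σ.symm hE'
  have hcancel : ∀ N : Finset β, (N.map σ.symm.toEmbedding).map σ.toEmbedding = N := by
    simp [map_map]
  rw [← hcancel M']
  simp only [map_map, Function.Embedding.equiv_toEmbedding_trans_symm_toEmbedding,
    map_refl] at hM
  rcases hP.2 _ hM with h | h | ⟨v, h⟩ <;> simp [h]

theorem IsModule.not_pair_subset {q x : α} (h3 : Is3Hypergraph W E) (hM : IsModule W E {q, x})
    (hqx : q ≠ x) (he : e ∈ E) : ¬ {q, x} ⊆ e := by
  intro hsub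
  have hcard : ({q, x} : Finset α).card = 2 := card_pair hqx
  have hdiff : (e \ {q, x}).Nonempty :=
    sdiff_nonempty_of_card_lt_card (by rw [(h3 e he).2, hcard]; norm_num)
  obtain ⟨a, -, hsingle, -⟩ := hM.2 e he (by rw [inter_eq_right.2 hsub]; simp) hdiff
  rw [inter_eq_right.2 hsub] at hsingle
  rw [hsingle, card_singleton] at hcard
  omega

theorem IsModule.map_swap_mem_of_mem_of_notMem {q x : α} (h3 : Is3Hypergraph W E)
    (hM : IsModule W E {q, x}) (he : e ∈ E) (hq : q ∈ e) (hx : x ∉ e) :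
    e.map (Equiv.swap q x).toEmbedding ∈ E := by
  have hinter : e ∩ {q, x} = {q} := by
    rw [inter_insert_of_mem hq, inter_singleton_of_notMem hx, insert_empty]
  have hdiff : (e \ {q, x}).Nonempty :=
    sdiff_nonempty_of_card_lt_card (by rw [(h3 e he).2]; exact card_le_two.trans_lt (by norm_num))
  obtain ⟨a, -, hsingle, hswap⟩ := hM.2 e he (by rw [hinter]; simp) hdiff
  obtain rfl : a = q := by rw [hinter] at hsingle; exact (singleton_injective hsingle).symm
  have h := hswap x (by simp)
  rwa [sdiff_singleton_eq_erase, union_comm, ← insert_eq, ← map_swap_insert (notMem_erase a e)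
    (fun h => hx (mem_of_mem_erase h)), insert_erase hq] at h

theorem IsModule.map_swap_mem_iff {q x : α} (h3 : Is3Hypergraph W E)
    (hM : IsModule W E {q, x}) : e.map (Equiv.swap q x).toEmbedding ∈ E ↔ e ∈ E := by
  have hmem : ∀ e ∈ E, e.map (Equiv.swap q x).toEmbedding ∈ E := by
    intro e he
    rcases eq_or_ne q x with rfl | hqx
    · simpa using he
    by_cases hq : q ∈ e <;> by_cases hx : x ∈ e
    · exact absurd (insert_subset hq (singleton_subset_iff.2 hx)) (hM.not_pair_subset h3 hqx he)
    · exact hM.map_swap_mem_of_mem_of_notMem h3 he hq hx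
    · rw [Equiv.swap_comm]
      exact (pair_comm q x ▸ hM).map_swap_mem_of_mem_of_notMem h3 he hx hq
    · rwa [map_swap_eq_self hq hx]
  refine ⟨fun h => ?_, hmem e⟩
  have := hmem _ h
  rwa [map_map, ← Equiv.trans_toEmbedding, Equiv.swap_swap, Equiv.refl_toEmbedding,
    map_refl] at this

theorem IsPrime.erase_of_isModule_pair {q x : α} (h3 : Is3Hypergraph W E)
    (hM : IsModule W E {q, x}) (hP : IsPrime (W.erase q) (induceEdges (W.erase q) E)) :
    IsPrime (W.erase x) (induceEdges (W.erase x) E) := by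
  set σ := Equiv.swap q x
  have hW : (W.erase q).map σ.toEmbedding = W.erase x := by
    rw [map_erase, Equiv.coe_toEmbedding, Equiv.swap_apply_left, map_perm fun a ha => ?_]
    obtain ⟨-, rfl | rfl⟩ := Equiv.swap_apply_ne_self_iff.1 ha
    exacts [hM.1 (mem_insert_self a _), hM.1 (by simp)]
  rw [← hW]
  refine hP.map_equiv σ fun e => ?_
  simp only [induceEdges, Set.mem_ofPred_eq, map_subset_map]
  rw [hM.map_swap_mem_iff h3]

theorem IsModule.eq_erase_or_eq_pair {w : α} (hM : IsModule W E M) (hM1 : 1 < M.card)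
    (hMW : M ≠ W) (hP : IsPrime (W.erase w) (induceEdges (W.erase w) E)) :
    M = W.erase w ∨ ∃ x, M = {w, x} := by
  have hres := hM.inter (W.erase w)
  rw [inter_erase, inter_eq_left.2 hM.1] at hres
  rcases hP.card_le_one_or_eq hres with h | h
  · right
    have hw : w ∈ M := by
      by_contra hw
      rw [erase_eq_of_notMem hw] at h
      omega
    obtain ⟨x, hx⟩ := card_eq_one.1 (le_antisymm h (by
      have := card_erase_of_mem hw; omega))
    exact ⟨x, by rw [← hx, insert_erase hw]⟩
  · left
    by_cases hw : w ∈ M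
    · refine absurd ?_ hMW
      rw [← insert_erase hw, h, insert_erase (hM.1 hw)]
    · rwa [erase_eq_of_notMem hw] at h

theorem isModule_pair_of_isPrime_erase {w₁ w₂ : α} (hnp : ¬ IsPrime W E) (h12 : w₁ ≠ w₂)
    (hw₂ : w₂ ∈ W)
    (hP₁ : IsPrime (W.erase w₁) (induceEdges (W.erase w₁) E))
    (hP₂ : IsPrime (W.erase w₂) (induceEdges (W.erase w₂) E)) :
    IsModule W E {w₁, w₂} := by
  have hW : 3 ≤ W.card := hP₁.1.trans card_erase_le
  obtain ⟨M, hM, hM1, hMW⟩ := exists_isModule_of_not_isPrime hW hnp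
  rcases hM.eq_erase_or_eq_pair hM1 hMW hP₁ with h₁ | ⟨x, hx⟩ <;>
    rcases hM.eq_erase_or_eq_pair hM1 hMW hP₂ with h₂ | ⟨y, hy⟩
  · have : w₂ ∈ M := h₁ ▸ mem_erase.2 ⟨h12.symm, hw₂⟩
    exact absurd (h₂ ▸ this) (notMem_erase w₂ W)
  · have := hP₁.1; rw [← h₁, hy] at this; have := card_le_two (a := w₂) (b := y); omega
  · have := hP₂.1; rw [← h₂, hx] at this; have := card_le_two (a := w₁) (b := x); omega
  · obtain rfl : x = w₂ := by
      have : w₂ ∈ M := hy ▸ mem_insert_self w₂ {y}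
      rw [hx, mem_insert, mem_singleton] at this
      exact (this.resolve_left h12.symm).symm
    rwa [← hx]

theorem notMem_of_isPrime_erase {q : α} (h3 : Is3Hypergraph W E) (hnp : ¬ IsPrime W E)
    (hP : IsPrime (W.erase q) (induceEdges (W.erase q) E))
    (hx : ∀ x ∈ W, x ≠ q → ¬ IsPrime (W.erase x) (induceEdges (W.erase x) E))
    (he : e ∈ E) : q ∉ e := by
  have hW : 3 ≤ W.card := hP.1.trans card_erase_le
  obtain ⟨M, hM, hM1, hMW⟩ := exists_isModule_of_not_isPrime hW hnp
  rcases hM.eq_erase_or_eq_pair hM1 hMW hP with rfl | ⟨x, rfl⟩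
  · intro hq
    have hinter : e ∩ W.erase q = e.erase q := by
      rw [inter_erase, inter_eq_left.2 (h3 e he).1]
    obtain ⟨a, -, hsingle, -⟩ := hM.2 e he
      (by rw [hinter]; exact card_pos.1 (by rw [card_erase_of_mem hq, (h3 e he).2]; norm_num))
      ⟨q, mem_sdiff.2 ⟨hq, notMem_erase q W⟩⟩
    have := congrArg card hsingle
    rw [hinter, card_erase_of_mem hq, (h3 e he).2, card_singleton] at this
    omega
  · have hqx : x ≠ q := by rintro rfl; simp at hM1
    exact absurd (hP.erase_of_isModule_pair h3 hM) (hx x (hM.1 (by simp)) hqx)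

theorem primAdj_iff_isPrime_erase {v w : α} :
    PrimAdj V E v w ↔ v ∈ V ∧ w ∈ V.erase v ∧ IsPrime ((V.erase v).erase w)
      (induceEdges ((V.erase v).erase w) (induceEdges (V.erase v) E)) := by
  have hV : V \ {v, w} = (V.erase v).erase w := by
    rw [sdiff_insert, sdiff_singleton_eq_erase, erase_right_comm]
  rw [PrimAdj, hV, induceEdges_induceEdges (erase_subset w (V.erase v)), mem_erase]
  tauto

theorem isModule_pair_of_primAdj {v w₁ w₂ : α}
    (hnp : ¬ IsPrime (V.erase v) (induceEdges (V.erase v) E))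
    (h₁ : PrimAdj V E v w₁) (h₂ : PrimAdj V E v w₂) (h12 : w₁ ≠ w₂) :
    IsModule (V.erase v) (induceEdges (V.erase v) E) {w₁, w₂} :=
  isModule_pair_of_isPrime_erase hnp h12 (primAdj_iff_isPrime_erase.1 h₂).2.1
    (primAdj_iff_isPrime_erase.1 h₁).2.2 (primAdj_iff_isPrime_erase.1 h₂).2.2

theorem mem_of_forall_primAdj_eq {p q : α} (h3 : Is3Hypergraph V E)
    (hnp : ¬ IsPrime (V.erase p) (induceEdges (V.erase p) E)) (hpq : PrimAdj V E p q)
    (huniq : ∀ x, PrimAdj V E p x → x = q) (he : e ∈ E) (hq : q ∈ e) : p ∈ e := by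
  by_contra hp
  obtain ⟨hpV, -, hP⟩ := primAdj_iff_isPrime_erase.1 hpq
  refine notMem_of_isPrime_erase (h3.induce _) hnp hP (fun x hx hxq hPx => hxq ?_)
    ((mem_induceEdges_erase_iff h3.isHypergraph hp).2 he) hq
  exact huniq x (primAdj_iff_isPrime_erase.2 ⟨hpV, hx, hPx⟩)

end Hypergraph

structure IsCriticalOddPath {α : Type*} [DecidableEq α] (verts : Finset α)
    (edges : Set (Finset α)) (m : ℕ) (φ : ℕ → α) : Prop where
  is3Hypergraph : Is3Hypergraph verts edges
  isCritical : IsCritical verts edges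
  injOn : Set.InjOn φ (Set.Iio m)
  primAdj_iff :
    ∀ i < m, ∀ j < m, (PrimAdj verts edges (φ i) (φ j) ↔ (j = i + 1 ∨ i = j + 1))
  exists_eq_of_primAdj : ∀ i < m, ∀ w, PrimAdj verts edges (φ i) w → ∃ j < m, w = φ j
  three_le : 3 ≤ m
  odd : Odd m

namespace IsCriticalOddPath

variable {α : Type*} [DecidableEq α] {verts : Finset α} {edges : Set (Finset α)} {m : ℕ}
  {φ : ℕ → α} {s e : Finset α} {i j : ℕ}

theorem apply_ne (hP : IsCriticalOddPath verts edges m φ) (hi : i < m) (hj : j < m)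
    (hij : i ≠ j) : φ i ≠ φ j :=
  fun h => hij (hP.injOn hi hj h)

theorem apply_notMem_pair {t k : ℕ} (hP : IsCriticalOddPath verts edges m φ) (ht : t < m)
    (hj : j < m) (hk : k < m) (htj : t ≠ j) (htk : t ≠ k) :
    φ t ∉ ({φ j, φ k} : Finset α) := by
  rw [mem_insert, mem_singleton, not_or]
  exact ⟨hP.apply_ne ht hj htj, hP.apply_ne ht hk htk⟩

theorem primAdj_succ (hP : IsCriticalOddPath verts edges m φ) (hi : i + 1 < m) :
    PrimAdj verts edges (φ i) (φ (i + 1)) :=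
  (hP.primAdj_iff i (by omega) (i + 1) hi).2 (Or.inl rfl)

theorem primAdj_pred (hP : IsCriticalOddPath verts edges m φ) (hi : i + 1 < m) :
    PrimAdj verts edges (φ (i + 1)) (φ i) :=
  (hP.primAdj_iff (i + 1) hi i (by omega)).2 (Or.inr rfl)

theorem apply_mem (hP : IsCriticalOddPath verts edges m φ) (hi : i < m) : φ i ∈ verts := by
  rcases Nat.lt_or_ge (i + 1) m with h | h
  · exact (hP.primAdj_succ h).2.1
  · obtain ⟨j, rfl⟩ : ∃ j, i = j + 1 := ⟨i - 1, by have := hP.three_le; omega⟩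
    exact (hP.primAdj_pred hi).2.1

theorem not_isPrime_erase (hP : IsCriticalOddPath verts edges m φ) (hi : i < m) :
    ¬ IsPrime (verts.erase (φ i)) (induceEdges (verts.erase (φ i)) edges) :=
  hP.isCritical.2 _ (hP.apply_mem hi)

theorem exists_adjacent_index_of_primAdj {w : α} (hP : IsCriticalOddPath verts edges m φ)
    (hi : i < m) (h : PrimAdj verts edges (φ i) w) :
    ∃ j < m, w = φ j ∧ (j = i + 1 ∨ i = j + 1) := by
  obtain ⟨j, hj, rfl⟩ := hP.exists_eq_of_primAdj i hi w h
  exact ⟨j, hj, rfl, (hP.primAdj_iff i hi j hj).1 h⟩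

theorem zero_mem_of_one_mem (hP : IsCriticalOddPath verts edges m φ) (he : e ∈ edges)
    (h : φ 1 ∈ e) : φ 0 ∈ e := by
  have hm := hP.three_le
  refine mem_of_forall_primAdj_eq hP.is3Hypergraph (hP.not_isPrime_erase (by omega))
    (hP.primAdj_succ (i := 0) (by omega)) (fun x hx => ?_) he h
  obtain ⟨j, -, rfl, hj⟩ := hP.exists_adjacent_index_of_primAdj (by omega) hx
  rw [show j = 1 by omega]

theorem last_mem_of_mem (hP : IsCriticalOddPath verts edges m φ) (he : e ∈ edges)
    (h : φ (m - 2) ∈ e) : φ (m - 1) ∈ e := by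
  have hm := hP.three_le
  refine mem_of_forall_primAdj_eq hP.is3Hypergraph (hP.not_isPrime_erase (by omega))
    ((hP.primAdj_iff (m - 1) (by omega) (m - 2) (by omega)).2 (Or.inr (by omega)))
    (fun x hx => ?_) he h
  obtain ⟨j, hjm, rfl, hj⟩ := hP.exists_adjacent_index_of_primAdj (by omega) hx
  rw [show j = m - 2 by omega]

theorem isModule_pair (hP : IsCriticalOddPath verts edges m φ) (hi : i + 2 < m) :
    IsModule (verts.erase (φ (i + 1))) (induceEdges (verts.erase (φ (i + 1))) edges)
      {φ i, φ (i + 2)} :=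
  isModule_pair_of_primAdj (hP.not_isPrime_erase (by omega)) (hP.primAdj_pred (by omega))
    (hP.primAdj_succ hi) (hP.apply_ne (by omega) hi (by omega))

theorem mem_of_pair_subset (hP : IsCriticalOddPath verts edges m φ) (hi : i + 2 < m)
    (he : e ∈ edges) (h : {φ i, φ (i + 2)} ⊆ e) : φ (i + 1) ∈ e := by
  by_contra hn
  exact (hP.isModule_pair hi).not_pair_subset (hP.is3Hypergraph.induce _)
    (hP.apply_ne (by omega) hi (by omega))
    ((mem_induceEdges_erase_iff hP.is3Hypergraph.isHypergraph hn).2 he) h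

theorem insert_mem_edges_iff_step (hP : IsCriticalOddPath verts edges m φ) (hi : i + 2 < m)
    (hs : ∀ t, i ≤ t → t ≤ i + 2 → φ t ∉ s) :
    insert (φ i) s ∈ edges ↔ insert (φ (i + 2)) s ∈ edges := by
  have hV := hP.is3Hypergraph.isHypergraph
  have h₀ : φ (i + 1) ∉ insert (φ i) s := by
    rw [mem_insert, not_or]
    exact ⟨hP.apply_ne (by omega) (by omega) (by omega), hs _ (by omega) (by omega)⟩
  have h₂ : φ (i + 1) ∉ insert (φ (i + 2)) s := by
    rw [mem_insert, not_or]
    exact ⟨hP.apply_ne (by omega) hi (by omega), hs _ (by omega) (by omega)⟩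
  rw [← mem_induceEdges_erase_iff hV h₀, ← mem_induceEdges_erase_iff hV h₂,
    ← map_swap_insert (hs i le_rfl (by omega)) (hs (i + 2) (by omega) le_rfl),
    (hP.isModule_pair hi).map_swap_mem_iff (hP.is3Hypergraph.induce _)]

theorem insert_mem_edges_iff_slide {a b : ℕ} (hP : IsCriticalOddPath verts edges m φ)
    (hab : a ≤ b) (hpar : a % 2 = b % 2) (hb : b < m)
    (hs : ∀ t, a ≤ t → t ≤ b → φ t ∉ s) :
    insert (φ a) s ∈ edges ↔ insert (φ b) s ∈ edges := by
  obtain ⟨d, rfl⟩ : ∃ d, b = a + 2 * d := ⟨(b - a) / 2, by omega⟩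
  clear hab hpar
  induction d with
  | zero => rfl
  | succ d ih =>
    rw [ih (by omega) fun t h₁ h₂ => hs t h₁ (by omega)]
    exact hP.insert_mem_edges_iff_step (by omega) fun t h₁ h₂ => hs t (by omega) (by omega)

theorem insert_notMem_edges_of_odd_left {x : ℕ} (hP : IsCriticalOddPath verts edges m φ)
    (hx : Odd x) (hxm : x < m) (hs : ∀ t ≤ x, φ t ∉ s) : insert (φ x) s ∉ edges := by
  intro he
  have hx' := Nat.odd_iff.1 hx
  have h₁ := (hP.insert_mem_edges_iff_slide (a := 1) (by omega) (by omega) hxm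
    fun t _ ht => hs t ht).2 he
  rcases mem_insert.1 (hP.zero_mem_of_one_mem h₁ (mem_insert_self _ _)) with h | h
  · exact hP.apply_ne (by omega) (by omega) (by omega) h
  · exact hs 0 (Nat.zero_le x) h

theorem insert_notMem_edges_of_odd_right {z : ℕ} (hP : IsCriticalOddPath verts edges m φ)
    (hz : Odd z) (hzm : z < m) (hs : ∀ t, z ≤ t → t < m → φ t ∉ s) :
    insert (φ z) s ∉ edges := by
  intro he
  have hz' := Nat.odd_iff.1 hz
  have hm := Nat.odd_iff.1 hP.odd
  have h₁ := (hP.insert_mem_edges_iff_slide (b := m - 2) (by omega) (by omega) (by omega)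
    fun t ht _ => hs t ht (by omega)).1 he
  rcases mem_insert.1 (hP.last_mem_of_mem h₁ (mem_insert_self _ _)) with h | h
  · exact hP.apply_ne (by omega) (by omega) (by omega) h
  · exact hs (m - 1) (by omega) (by omega) h

theorem insert_insert_notMem_edges_of_even {x y : ℕ} (hP : IsCriticalOddPath verts edges m φ)
    (hx : Even x) (hy : Even y) (hxy : x < y) (hym : y < m)
    (hs : ∀ t, x ≤ t → t ≤ y → φ t ∉ s) :
    insert (φ y) (insert (φ x) s) ∉ edges := by
  intro he
  have hx' := Nat.even_iff.1 hx
  have hy' := Nat.even_iff.1 hy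
  have h₂ := (hP.insert_mem_edges_iff_slide (a := x + 2) (by omega) (by omega) hym
    fun t h₁ h₂ => by
      rw [mem_insert, not_or]
      exact ⟨hP.apply_ne (by omega) (by omega) (by omega), hs t (by omega) h₂⟩).2 he
  have h₁ := hP.mem_of_pair_subset (by omega) h₂
    (insert_subset_iff.2 ⟨mem_insert_of_mem (mem_insert_self _ _),
      singleton_subset_iff.2 (mem_insert_self _ _)⟩)
  rcases mem_insert.1 h₁ with h | h
  · exact hP.apply_ne (by omega) (by omega) (by omega) h
  rcases mem_insert.1 h with h | h
  · exact hP.apply_ne (by omega) (by omega) (by omega) h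
  · exact hs (x + 1) (by omega) (by omega) h

theorem one_notMem_of_zero_one_two_notMem (hP : IsCriticalOddPath verts edges m φ)
    (h012 : ({φ 0, φ 1, φ 2} : Finset α) ∉ edges) (he : e ∈ edges) : φ 1 ∉ e := by
  have hm := hP.three_le
  intro h₁
  obtain ⟨u, hu₁, -, rfl⟩ := exists_eq_triple_of_card_eq_three (hP.is3Hypergraph e he).2 h₁
    (hP.zero_mem_of_one_mem he h₁) (hP.apply_ne (by omega) (by omega) (by omega))
  by_cases hu : ∃ z, 1 ≤ z ∧ z < m ∧ φ z = u
  · obtain ⟨z, hz₁, hzm, rfl⟩ := hu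
    have hz : z ≠ 1 := by rintro rfl; exact hu₁ rfl
    rw [pair_comm, insert_comm] at he
    rcases Nat.even_or_odd z with hze | hzo
    · refine h012 ?_
      have := (hP.insert_mem_edges_iff_slide (a := 2) (b := z) (by omega)
        (by have := Nat.even_iff.1 hze; omega) hzm
        fun t ht _ => hP.apply_notMem_pair (by omega) (by omega) (by omega) (by omega)
          (by omega)).2 he
      rwa [pair_comm (φ 1) (φ 0), insert_comm (φ 2) (φ 0), pair_comm (φ 2) (φ 1)] at this
    · exact hP.insert_notMem_edges_of_odd_right hzo hzm
        (fun t ht htm => hP.apply_notMem_pair htm (by omega) (by omega) (by omega)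
          (by omega)) he
  · refine hP.insert_notMem_edges_of_odd_right odd_one (by omega) (fun t ht htm => ?_) he
    rw [mem_insert, mem_singleton, not_or]
    exact ⟨hP.apply_ne htm (by omega) (by omega), fun h => hu ⟨t, ht, htm, h⟩⟩

theorem zero_one_two_mem_edges (hP : IsCriticalOddPath verts edges m φ) :
    ({φ 0, φ 1, φ 2} : Finset α) ∈ edges := by
  have hm := hP.three_le
  by_contra h012
  rcases hP.isCritical.1.card_le_one_or_eq (isModule_erase_of_forall_notMem
      hP.is3Hypergraph.isHypergraph fun e => hP.one_notMem_of_zero_one_two_notMem h012) with h | h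
  · have : ({φ 0, φ 2} : Finset α) ⊆ verts.erase (φ 1) := by
      simp only [insert_subset_iff, singleton_subset_iff, mem_erase]
      exact ⟨⟨hP.apply_ne (by omega) (by omega) (by omega), hP.apply_mem (by omega)⟩,
        hP.apply_ne (by omega) (by omega) (by omega), hP.apply_mem (by omega)⟩
    have := card_le_card this
    rw [card_pair (hP.apply_ne (by omega) (by omega) (by omega))] at this
    omega
  · have h₁ := hP.apply_mem (i := 1) (by omega)
    rw [← h] at h₁
    exact notMem_erase _ _ h₁

theorem even_odd_even_of_mem_edges {x y z : ℕ} (hP : IsCriticalOddPath verts edges m φ)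
    (hxy : x < y) (hyz : y < z) (hzm : z < m) (he : ({φ x, φ y, φ z} : Finset α) ∈ edges) :
    Even x ∧ Odd y ∧ Even z := by
  have hx : Even x := Nat.not_odd_iff_even.1 fun hx =>
    hP.insert_notMem_edges_of_odd_left hx (by omega)
      (fun t ht => hP.apply_notMem_pair (by omega) (by omega) hzm (by omega) (by omega)) he
  have hz : Even z := Nat.not_odd_iff_even.1 fun hz => by
    rw [pair_comm, insert_comm] at he
    exact hP.insert_notMem_edges_of_odd_right hz hzm
      (fun t ht htm => hP.apply_notMem_pair htm (by omega) (by omega) (by omega) (by omega)) he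
  refine ⟨hx, Nat.not_even_iff_odd.1 fun hy => ?_, hz⟩
  rw [insert_comm] at he
  exact hP.insert_insert_notMem_edges_of_even hx hy hxy (by omega)
    (fun t _ ht => by rw [mem_singleton]; exact hP.apply_ne (by omega) hzm (by omega)) he

theorem mem_edges_of_even_odd_even {x y z : ℕ} (hP : IsCriticalOddPath verts edges m φ)
    (hx : Even x) (hy : Odd y) (hz : Even z) (hxy : x < y) (hyz : y < z) (hzm : z < m) :
    ({φ x, φ y, φ z} : Finset α) ∈ edges := by
  rw [Nat.even_iff] at hx hz
  rw [Nat.odd_iff] at hy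
  have h₂ : insert (φ 2) {φ 0, φ 1} ∈ edges := by
    rw [← insert_comm, ← pair_comm]
    exact hP.zero_one_two_mem_edges
  have h₃ := (hP.insert_mem_edges_iff_slide (by omega) (by omega) hzm
    fun t ht _ => hP.apply_notMem_pair (by omega) (by omega) (by omega) (by omega)
      (by omega)).1 h₂
  rw [pair_comm, insert_comm] at h₃
  have h₄ := (hP.insert_mem_edges_iff_slide (b := y) (by omega) (by omega) (by omega)
    fun t ht ht' => hP.apply_notMem_pair (by omega) hzm (by omega) (by omega)
      (by omega)).1 h₃
  rw [pair_comm, insert_comm] at h₄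
  exact (hP.insert_mem_edges_iff_slide (b := x) (by omega) (by omega) (by omega)
    fun t _ ht => hP.apply_notMem_pair (by omega) (by omega) hzm (by omega)
      (by omega)).1 h₄

end IsCriticalOddPath

theorem odd_path_component_induces_U_general {α : Type*} [DecidableEq α]
    (verts : Finset α) (edges : Set (Finset α)) (h3 : Is3Hypergraph verts edges)
    (hc : IsCritical verts edges)
    (m : ℕ) (φ : ℕ → α) (hinj : Set.InjOn φ (Set.Iio m))
    (hpath : ∀ i < m, ∀ j < m, (PrimAdj verts edges (φ i) (φ j) ↔ (j = i + 1 ∨ i = j + 1)))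
    (hclosed : ∀ i < m, ∀ w, PrimAdj verts edges (φ i) w → ∃ j < m, w = φ j)
    (hm3 : 3 ≤ m) (hmodd : Odd m) :
    ∀ e : Finset α, e ∈ induceEdges ((Finset.range m).image φ) edges ↔
      ∃ i j k, i ≤ j ∧ j < k ∧ 2 * k < m ∧
        e = {φ (2 * i), φ (2 * j + 1), φ (2 * k)} := by
  have hP : IsCriticalOddPath verts edges m φ := ⟨h3, hc, hinj, hpath, hclosed, hm3, hmodd⟩
  intro e
  constructor
  · rintro ⟨he, hsub⟩
    obtain ⟨x, y, z, hxy, hyz, hs, rfl⟩ := exists_lt_lt_eq_image_of_card_eq_three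
      (hinj.mono fun t ht => Set.mem_Iio.2 (mem_range.1 ht)) hsub (h3 _ he).2
    have hzm : z < m := mem_range.1 (hs (by simp))
    obtain ⟨hx, hy, hz⟩ := hP.even_odd_even_of_mem_edges hxy hyz hzm he
    rw [Nat.even_iff] at hx hz
    rw [Nat.odd_iff] at hy
    refine ⟨x / 2, y / 2, z / 2, by omega, by omega, by omega, ?_⟩
    rw [show 2 * (x / 2) = x by omega, show 2 * (y / 2) + 1 = y by omega,
      show 2 * (z / 2) = z by omega]
  · rintro ⟨i, j, k, hij, hjk, hkm, rfl⟩
    refine ⟨hP.mem_edges_of_even_odd_even (even_two_mul i) (odd_two_mul_add_one j)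
      (even_two_mul k) (by omega) (by omega) hkm, ?_⟩
    simp only [insert_subset_iff, singleton_subset_iff, mem_image, mem_range]
    exact ⟨⟨_, by omega, rfl⟩, ⟨_, by omega, rfl⟩, ⟨_, hkm, rfl⟩⟩

theorem odd_path_component_induces_U {α : Type*} [DecidableEq α]
    (verts : Finset α) (edges : Set (Finset α)) (h3 : Is3Hypergraph verts edges)
    (hc : IsCritical verts edges) (h5 : 5 ≤ verts.card)
    (hnc : ¬ IsCircular verts edges)
    (m : ℕ) (φ : ℕ → α) (hinj : Set.InjOn φ (Set.Iio m))
    (hsub : (Finset.range m).image φ ⊆ verts)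
    (hpath : ∀ i < m, ∀ j < m, (PrimAdj verts edges (φ i) (φ j) ↔ (j = i + 1 ∨ i = j + 1)))
    (hclosed : ∀ i < m, ∀ w, PrimAdj verts edges (φ i) w → ∃ j < m, w = φ j)
    (hm3 : 3 ≤ m) (hmodd : Odd m) :
    ∀ e : Finset α, e ∈ induceEdges ((Finset.range m).image φ) edges ↔
      ∃ i j k, i ≤ j ∧ j < k ∧ 2 * k < m ∧
        e = {φ (2 * i), φ (2 * j + 1), φ (2 * k)} :=
  odd_path_component_induces_U_general verts edges h3 hc m φ hinj hpath hclosed hm3 hmodd
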